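/- Filtered backprojection formula for convolutions: let f and η be Schwartz functions on ℝ². For θ ∈ ℝ define R_θ f(t) = ∫_ℝ f(t·u_θ + s·v_θ) ds. Then for every x ∈ ℝ², (f ⋆ η)(x) = ∫₀^{π} ∫_ℝ (R_θ f)^(t) · |t| · η̂(t·u_θ) · e^{2πi t ⟨x, u_θ⟩} dt dθ, where ⋆ denotes convolution on ℝ², (R_θ f)^ is the one-dimensional Fourier transform of R_θ f, and η̂ is the two-dimensional Fourier transform of η. -/

import Mathlib

open MeasureTheory Real RealInnerProductSpace

/-- The unit vector u_θ = (cos θ, sin θ) in ℝ². -/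
noncomputable def uVec (θ : ℝ) : EuclideanSpace ℝ (Fin 2) :=
  (WithLp.equiv 2 (Fin 2 → ℝ)).symm ![Real.cos θ, Real.sin θ]

/-- The unit vector v_θ = u_{θ+π/2} = (−sin θ, cos θ) in ℝ². -/
noncomputable def vVec (θ : ℝ) : EuclideanSpace ℝ (Fin 2) :=
  (WithLp.equiv 2 (Fin 2 → ℝ)).symm ![-Real.sin θ, Real.cos θ]

/-- The radialization η²(x) = (1/(2π)) ∫₀^{2π} η(⟨x,u_θ⟩) η(⟨x,v_θ⟩) dθ. -/
noncomputable def radialization (η : ℝ → ℝ) (x : EuclideanSpace ℝ (Fin 2)) : ℝ :=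
  (1 / (2 * π)) * ∫ θ in (0:ℝ)..(2 * π), η ⟪x, uVec θ⟫ * η ⟪x, vVec θ⟫

open FourierTransform

/-- The Radon projection R_θ f(t) = ∫ f(t u_θ + s v_θ) ds. -/
noncomputable def radon (f : EuclideanSpace ℝ (Fin 2) → ℂ) (θ : ℝ) (t : ℝ) : ℂ :=
  ∫ s : ℝ, f (t • uVec θ + s • vVec θ)

/-- Convolution on ℝ² of complex-valued functions: (f ⋆ η)(x) = ∫ f(y) η(x − y) dy. -/
noncomputable def conv2c (f η : EuclideanSpace ℝ (Fin 2) → ℂ)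
    (x : EuclideanSpace ℝ (Fin 2)) : ℂ :=
  ∫ y : EuclideanSpace ℝ (Fin 2), f y * η (x - y)

/-!
By Fourier inversion for Schwartz functions, `f ⋆ η` is the inverse Fourier transform of
`𝓕 f · 𝓕 η`. Writing that Fourier integral over `ℝ²` in polar coordinates with a signed radius
`t ∈ ℝ` and an angle `θ ∈ (0, π)` produces the Jacobian `|t|`, and the Fourier slice theorem
`𝓕 (R_θ f) t = 𝓕 f (t u_θ)`, which is Fubini's theorem in the orthonormal frame `(u_θ, v_θ)`,
identifies `𝓕 f` on the line `ℝ u_θ` with the one-dimensional transform of the projection.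
-/

open Set

lemma norm_uVec (θ : ℝ) : ‖uVec θ‖ = 1 := by
  simp [uVec, EuclideanSpace.norm_eq, Fin.sum_univ_two]

lemma norm_vVec (θ : ℝ) : ‖vVec θ‖ = 1 := by
  simp [vVec, EuclideanSpace.norm_eq, Fin.sum_univ_two]

lemma inner_vVec_uVec (θ : ℝ) : ⟪vVec θ, uVec θ⟫ = 0 := by
  simp [uVec, vVec, PiLp.inner_apply, Fin.sum_univ_two, mul_comm]

lemma uVec_sub_pi (θ : ℝ) : uVec (θ - π) = -uVec θ := by
  ext i
  fin_cases i <;> simp [uVec, cos_sub_pi, sin_sub_pi]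

lemma orthonormal_uVec_vVec (θ : ℝ) : Orthonormal ℝ ![uVec θ, vVec θ] := by
  rw [orthonormal_iff_ite]
  intro i j
  fin_cases i <;> fin_cases j <;>
    simp [norm_uVec, norm_vVec, inner_vVec_uVec, real_inner_comm (vVec θ)]

noncomputable def frameBasis (θ : ℝ) : OrthonormalBasis (Fin 2) ℝ (EuclideanSpace ℝ (Fin 2)) :=
  (basisOfOrthonormalOfCardEqFinrank (orthonormal_uVec_vVec θ) (by simp)).toOrthonormalBasis
    (by simpa using orthonormal_uVec_vVec θ)

noncomputable def euclideanOfProd : ℝ × ℝ ≃ᵐ EuclideanSpace ℝ (Fin 2) :=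
  MeasurableEquiv.finTwoArrow.symm.trans (MeasurableEquiv.toLp 2 (Fin 2 → ℝ))

lemma measurePreserving_euclideanOfProd : MeasurePreserving euclideanOfProd :=
  (PiLp.volume_preserving_toLp (Fin 2)).comp (volume_preserving_finTwoArrow ℝ).symm

lemma euclideanOfProd_apply (p : ℝ × ℝ) (i : Fin 2) : euclideanOfProd p i = ![p.1, p.2] i := rfl

lemma euclideanOfProd_polarCoord_symm (p : ℝ × ℝ) :
    euclideanOfProd (polarCoord.symm p) = p.1 • uVec p.2 := by
  ext i
  fin_cases i <;> simp [euclideanOfProd_apply, uVec]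

noncomputable def frame (θ : ℝ) : ℝ × ℝ ≃ᵐ EuclideanSpace ℝ (Fin 2) :=
  euclideanOfProd.trans (frameBasis θ).repr.symm.toHomeomorph.toMeasurableEquiv

lemma frame_apply (θ : ℝ) (p : ℝ × ℝ) : frame θ p = p.1 • uVec θ + p.2 • vVec θ := by
  simp [frame, Fin.sum_univ_two, euclideanOfProd_apply, frameBasis]

lemma measurePreserving_frame (θ : ℝ) : MeasurePreserving (frame θ) :=
  (frameBasis θ).measurePreserving_repr_symm.comp measurePreserving_euclideanOfProd

lemma inner_frame_uVec (θ : ℝ) (p : ℝ × ℝ) : ⟪frame θ p, uVec θ⟫ = p.1 := by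
  simp [frame_apply, inner_add_left, real_inner_smul_left, norm_uVec, inner_vVec_uVec]

theorem fourier_radon {f : EuclideanSpace ℝ (Fin 2) → ℂ} (hf : Integrable f) (θ t : ℝ) :
    𝓕 (radon f θ) t = 𝓕 f (t • uVec θ) := by
  have hmp := measurePreserving_frame θ
  have hint : Integrable (fun p : ℝ × ℝ => 𝐞 (-(t * p.1)) • f (frame θ p)) := by
    have := (hmp.integrable_comp_emb (frame θ).measurableEmbedding).2
      ((Real.fourierIntegral_convergent_iff (t • uVec θ)).2 hf)
    simpa [Function.comp_def, inner_smul_right, inner_frame_uVec] using this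
  calc 𝓕 (radon f θ) t
      = ∫ a : ℝ, ∫ b : ℝ, 𝐞 (-(t * a)) • f (frame θ (a, b)) := by
        simp [Real.fourier_eq, radon, frame_apply, Circle.smul_def, integral_const_mul]
    _ = ∫ p : ℝ × ℝ, 𝐞 (-(t * p.1)) • f (frame θ p) := (integral_prod _ hint).symm
    _ = 𝓕 f (t • uVec θ) := by
        rw [Real.fourier_eq, ← hmp.integral_comp' (fun v => 𝐞 (-⟪v, t • uVec θ⟫) • f v)]
        simp [inner_smul_right, inner_frame_uVec]

section Polar

variable {E : Type*} [NormedAddCommGroup E]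

lemma integrableOn_Iic_of_integrableOn_Ioi_comp_neg {ψ : ℝ → E}
    (h : IntegrableOn (fun r => ψ (-r)) (Ioi 0)) : IntegrableOn ψ (Iic 0) := by
  rw [← integrableOn_Ici_iff_integrableOn_Ioi] at h
  exact ((Measure.measurePreserving_neg volume).integrableOn_comp_preimage
    measurableEmbedding_neg).1 (by simpa [Function.comp_def] using h)

variable [NormedSpace ℝ E]

lemma integral_eq_integral_Ioi_comp_neg_add {ψ : ℝ → E}
    (h_neg : IntegrableOn (fun r => ψ (-r)) (Ioi 0)) (h_pos : IntegrableOn ψ (Ioi 0)) :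
    ∫ t, ψ t = (∫ r in Ioi 0, ψ (-r)) + ∫ r in Ioi 0, ψ r := by
  rw [integral_comp_neg_Ioi 0 ψ, neg_zero, intervalIntegral.integral_Iic_add_Ioi
    (integrableOn_Iic_of_integrableOn_Ioi_comp_neg h_neg) h_pos]

lemma intervalIntegral_neg_eq_integral_comp_sub_add {R : ℝ → E} {p : ℝ}
    (hR : IntervalIntegrable R volume (-p) p) :
    ∫ θ in (-p)..p, R θ = ∫ θ in 0..p, (R (θ - p) + R θ) := by
  have h_zero : (0 : ℝ) ∈ uIcc (-p) p := by
    rcases le_total 0 p with hp | hp <;> simp [hp]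
  have h_left : IntervalIntegrable R volume (-p) 0 := hR.mono_set (uIcc_subset_uIcc_left h_zero)
  have h_right : IntervalIntegrable R volume 0 p := hR.mono_set (uIcc_subset_uIcc_right h_zero)
  have h_shift : IntervalIntegrable (fun θ => R (θ - p)) volume 0 p := by
    simpa using h_left.comp_sub_right p
  rw [intervalIntegral.integral_add h_shift h_right, intervalIntegral.integral_comp_sub_right,
    zero_sub, sub_self, intervalIntegral.integral_add_adjacent_intervals h_left h_right]

lemma integrableOn_polarCoord_target {g : ℝ × ℝ → E} (hg : Integrable g) :
    IntegrableOn (fun p => p.1 • g (polarCoord.symm p)) polarCoord.target := by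
  have himage := integrableOn_image_iff_integrableOn_abs_det_fderiv_smul volume
    polarCoord.open_target.measurableSet
    (fun p _ => (hasFDerivAt_polarCoord_symm p).hasFDerivWithinAt) polarCoord.symm.injOn g
  rw [OpenPartialHomeomorph.symm_image_target_eq_source] at himage
  refine (himage.1 hg.integrableOn).congr_fun (fun p hp => ?_) polarCoord.open_target.measurableSet
  simp only [det_fderivPolarCoordSymm, abs_of_pos (mem_Ioi.1 hp.1)]

lemma integrable_polar_uVec {g : EuclideanSpace ℝ (Fin 2) → E} (hg : Integrable g) :
    Integrable (fun p : ℝ × ℝ => p.1 • g (p.1 • uVec p.2))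
      ((volume.restrict (Ioi 0)).prod (volume.restrict (Ioo (-π) π))) := by
  have := integrableOn_polarCoord_target
    ((measurePreserving_euclideanOfProd.integrable_comp_emb
      euclideanOfProd.measurableEmbedding).2 hg)
  rw [Measure.prod_restrict, ← Measure.volume_eq_prod, ← polarCoord_target]
  simpa only [IntegrableOn, Function.comp_apply, euclideanOfProd_polarCoord_symm] using this

lemma integral_eq_integral_polar_uVec {g : EuclideanSpace ℝ (Fin 2) → E} (hg : Integrable g) :
    ∫ ω, g ω = ∫ θ in Ioo (-π) π, ∫ r in Ioi (0 : ℝ), r • g (r • uVec θ) := by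
  rw [← measurePreserving_euclideanOfProd.integral_comp' g, ← integral_comp_polarCoord_symm,
    polarCoord_target, Measure.volume_eq_prod, ← Measure.prod_restrict]
  simp only [euclideanOfProd_polarCoord_symm]
  exact integral_prod_symm _ (integrable_polar_uVec hg)

theorem integral_eq_intervalIntegral_integral_abs_smul {g : EuclideanSpace ℝ (Fin 2) → E}
    (hg : Integrable g) :
    ∫ ω, g ω = ∫ θ in 0..π, ∫ t : ℝ, |t| • g (t • uVec θ) := by
  set R : ℝ → E := fun θ => ∫ r in Ioi (0 : ℝ), r • g (r • uVec θ)
  have hI := integrable_polar_uVec hg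
  have hR : IntegrableOn R (Ioo (-π) π) := hI.integral_prod_right
  have hrays : ∀ᵐ θ : ℝ, θ ∈ Ioo (-π) π → IntegrableOn (fun r : ℝ => r • g (r • uVec θ)) (Ioi 0) :=
    (ae_restrict_iff' measurableSet_Ioo).1 hI.prod_left_ae
  have hrays_shift := (measurePreserving_sub_right volume π).quasiMeasurePreserving.ae hrays
  calc ∫ ω, g ω = ∫ θ in Ioo (-π) π, R θ := integral_eq_integral_polar_uVec hg
    _ = ∫ θ in (-π)..π, R θ := by
      rw [intervalIntegral.integral_of_le (by linarith [pi_pos]), integral_Ioc_eq_integral_Ioo]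
    _ = ∫ θ in 0..π, (R (θ - π) + R θ) := by
      refine intervalIntegral_neg_eq_integral_comp_sub_add ?_
      rwa [intervalIntegrable_iff_integrableOn_Ioo_of_le (by linarith [pi_pos])]
    _ = ∫ θ in 0..π, ∫ t : ℝ, |t| • g (t • uVec θ) := by
      refine intervalIntegral.integral_congr_ae ?_
      filter_upwards [hrays, hrays_shift, Measure.ae_ne volume π] with θ hθ hθ_shift hθπ hθ0π
      rw [uIoc_of_le pi_pos.le] at hθ0π
      have hθ' : θ ∈ Ioo (-π) π := ⟨by linarith [hθ0π.1, pi_pos], lt_of_le_of_ne hθ0π.2 hθπ⟩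
      have hθ_shift' : θ - π ∈ Ioo (-π) π := ⟨by linarith [hθ0π.1], by linarith [hθ0π.2, pi_pos]⟩
      -- the line through `u_θ` is the ray at angle `θ` together with the ray at angle `θ - π`
      have hneg : ∀ r ∈ Ioi (0 : ℝ), |-r| • g (-r • uVec θ) = r • g (r • uVec (θ - π)) :=
        fun r hr => by rw [abs_neg, abs_of_pos hr, uVec_sub_pi, smul_neg, neg_smul]
      have hpos : ∀ r ∈ Ioi (0 : ℝ), |r| • g (r • uVec θ) = r • g (r • uVec θ) :=
        fun r hr => by rw [abs_of_pos hr]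
      rw [integral_eq_integral_Ioi_comp_neg_add, setIntegral_congr_fun measurableSet_Ioi hneg,
        setIntegral_congr_fun measurableSet_Ioi hpos]
      · exact (hθ_shift hθ_shift').congr_fun (fun r hr => (hneg r hr).symm) measurableSet_Ioi
      · exact (hθ hθ').congr_fun (fun r hr => (hpos r hr).symm) measurableSet_Ioi

end Polar

open SchwartzMap in
theorem integral_mul_sub_eq_integral_fourier {V : Type*} [NormedAddCommGroup V]
    [InnerProductSpace ℝ V] [FiniteDimensional ℝ V] [MeasurableSpace V] [BorelSpace V]
    (f η : 𝓢(V, ℂ)) (x : V) :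
    ∫ y, f y * η (x - y) =
      ∫ ω, 𝓕 (f : V → ℂ) ω * 𝓕 (η : V → ℂ) ω * Complex.exp (↑(2 * π * ⟪x, ω⟫) * Complex.I) := by
  set c := convolution (ContinuousLinearMap.mul ℂ ℂ) f η
  have hc : c x = ∫ y, f y * η (x - y) := convolution_apply _ f η x
  have hinv : c x = 𝓕⁻ (𝓕 c) x := by simp
  rw [← hc, hinv, fourier_convolution, fourierInv_coe, Real.fourierInv_eq']
  simp only [pairing_apply_apply, ContinuousLinearMap.mul_apply', fourier_coe, smul_eq_mul,
    real_inner_comm x]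
  exact integral_congr_ae (ae_of_all _ fun ω => mul_comm _ _)

/-- filtered backprojection for convolutions: for Schwartz functions f, η
on ℝ² and every x ∈ ℝ²,
(f ⋆ η)(x) = ∫₀^π ∫_ℝ (R_θ f)^(t) |t| η̂(t u_θ) e^{2πit⟨x,u_θ⟩} dt dθ. -/
theorem filtered_backprojection (f η : SchwartzMap (EuclideanSpace ℝ (Fin 2)) ℂ)
    (x : EuclideanSpace ℝ (Fin 2)) :
    conv2c (fun y => f y) (fun y => η y) x = ∫ θ in (0:ℝ)..π, ∫ t : ℝ,
      𝓕 (radon (fun y => f y) θ) t * (|t| : ℝ) * 𝓕 (fun y => η y) (t • uVec θ) *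
        Complex.exp (2 * (π : ℂ) * Complex.I * (t : ℂ) * ((⟪x, uVec θ⟫ : ℝ) : ℂ)) := by
  have hG : Integrable fun ω => 𝓕 (f : _ → ℂ) ω * 𝓕 (η : _ → ℂ) ω *
      Complex.exp (↑(2 * π * ⟪x, ω⟫) * Complex.I) :=
    ((𝓕 f).integrable.mul_bdd (𝓕 η).continuous.aestronglyMeasurable
      (ae_of_all _ (SchwartzMap.norm_le_seminorm ℝ (𝓕 η)))).mul_bdd (by fun_prop)
      (ae_of_all _ fun ω => (Complex.norm_exp_ofReal_mul_I _).le)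
  rw [conv2c, integral_mul_sub_eq_integral_fourier,
    integral_eq_intervalIntegral_integral_abs_smul hG]
  refine intervalIntegral.integral_congr fun θ _ => integral_congr_ae (ae_of_all _ fun t => ?_)
  simp only [fourier_radon f.integrable, inner_smul_right, Complex.real_smul]
  push_cast
  ac_rfl
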